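/- Let τ be a θ-compatible stopping time such that for every x ∈ 𝐗, τ is ℙ_x-almost surely finite. Then for every nonnegative borelian function f on 𝐗 and every x ∈ 𝐗 the following identities hold (as equalities in [0,∞]): (R+Q)f(x) = f(x) + RPf(x); f(x) + PRf(x) = Rf(x) + SRf(x); Sf(x) + PQf(x) = SQf(x) + Qf(x); and RSf(x) = Qf(x). -/

import Mathlib

open MeasureTheory Filter Set Topology
open scoped ENNReal NNReal ENat

noncomputable section

/-- The shift on path space. -/
def pshift {X : Type*} (ω : ℕ → X) : ℕ → X := fun n => ω (n + 1)

/-- The natural filtration on path space: the σ-algebra generated by the first `n+1`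
coordinates. -/
def pathFiltration (X : Type*) [MeasurableSpace X] (n : ℕ) : MeasurableSpace (ℕ → X) :=
  MeasurableSpace.comap (fun ω (i : Fin (n + 1)) => ω (i : ℕ)) inferInstance

/-- A Markov chain on `X`, given by the family of its path-space laws `ℙ_x`. -/
structure MarkovChain (X : Type*) [MeasurableSpace X] where
  law : X → Measure (ℕ → X)
  prob : ∀ x, IsProbabilityMeasure (law x)
  meas_law : Measurable law
  start : ∀ x, (law x).map (fun ω => ω 0) = Measure.dirac x
  markov : ∀ (x : X) (n : ℕ) (A : Set (ℕ → X)),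
      MeasurableSet[pathFiltration X n] A → ∀ g : (ℕ → X) → ℝ≥0∞, Measurable g →
      ∫⁻ ω in A, g (fun k => ω (k + n)) ∂law x = ∫⁻ ω in A, ∫⁻ η, g η ∂law (ω n) ∂law x

variable {X : Type*} [MeasurableSpace X]

/-- A stopping time on path space, with values in `ℕ∞`. -/
def IsPathStoppingTime (τ : (ℕ → X) → ℕ∞) : Prop :=
  ∀ n : ℕ, MeasurableSet[pathFiltration X n] {ω | τ ω = (n : ℕ∞)}

/-- `τ` is θ-compatible: `ℙ_x(τ = 0) = 0` and, almost everywhere, `τ ≥ 2` implies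
`τ ∘ θ = τ - 1`. -/
def ThetaCompatible (M : MarkovChain X) (τ : (ℕ → X) → ℕ∞) : Prop :=
  (∀ x, M.law x {ω | τ ω = 0} = 0) ∧
    ∀ x, ∀ᵐ ω ∂M.law x, 2 ≤ τ ω → τ (pshift ω) = τ ω - 1

/-- The Markov operator `P` on nonnegative functions: `Pf(x) = 𝔼_x f(X_1)`. -/
def Pop (M : MarkovChain X) (f : X → ℝ≥0∞) (x : X) : ℝ≥0∞ := ∫⁻ ω, f (ω 1) ∂M.law x

/-- The induced operator `Q`: `Qg(x) = ∫_{τ<∞} g(X_τ) dℙ_x`. -/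
def Qop (M : MarkovChain X) (τ : (ℕ → X) → ℕ∞) (g : X → ℝ≥0∞) (x : X) : ℝ≥0∞ :=
  ∫⁻ ω in {ω | τ ω ≠ ⊤}, g (ω (τ ω).toNat) ∂M.law x

/-- The operator `S`: `Sf(x) = ∫_{τ=1} f(X_1) dℙ_x`. -/
def Sop (M : MarkovChain X) (τ : (ℕ → X) → ℕ∞) (f : X → ℝ≥0∞) (x : X) : ℝ≥0∞ :=
  ∫⁻ ω in {ω | τ ω = 1}, f (ω 1) ∂M.law x

/-- The operator `R`: `Rf(x) = ∫_{τ<∞} (f(X_0) + ⋯ + f(X_{τ-1})) dℙ_x`. -/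
def Rop (M : MarkovChain X) (τ : (ℕ → X) → ℕ∞) (f : X → ℝ≥0∞) (x : X) : ℝ≥0∞ :=
  ∫⁻ ω in {ω | τ ω ≠ ⊤}, ∑ k ∈ Finset.range (τ ω).toNat, f (ω k) ∂M.law x

/-- `𝔼_x τ`, with values in `[0,∞]`. -/
def EtauE (M : MarkovChain X) (τ : (ℕ → X) → ℕ∞) (x : X) : ℝ≥0∞ :=
  ∫⁻ ω, (τ ω : ℝ≥0∞) ∂M.law x

/-- `μ` is `P`-invariant: `∫ Pf dμ = ∫ f dμ` for every bounded nonnegative borelian `f`. -/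
def PInvariant (M : MarkovChain X) (μ : Measure X) : Prop :=
  ∀ f : X → ℝ≥0∞, Measurable f → (∃ C : ℝ≥0∞, C ≠ ⊤ ∧ ∀ x, f x ≤ C) →
    ∫⁻ x, Pop M f x ∂μ = ∫⁻ x, f x ∂μ

/-- `ν` is `Q`-invariant: `∫ Qf dν = ∫ f dν` for every bounded nonnegative borelian `f`. -/
def QInvariant (M : MarkovChain X) (τ : (ℕ → X) → ℕ∞) (ν : Measure X) : Prop :=
  ∀ f : X → ℝ≥0∞, Measurable f → (∃ C : ℝ≥0∞, C ≠ ⊤ ∧ ∀ x, f x ≤ C) →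
    ∫⁻ x, Qop M τ f x ∂ν = ∫⁻ x, f x ∂ν

/-- `ν = S*μ`, i.e. `ν(A) = ∫ S𝟙_A dμ` for every borelian `A`. -/
def SstarEq (M : MarkovChain X) (τ : (ℕ → X) → ℕ∞) (μ ν : Measure X) : Prop :=
  ∀ A : Set X, MeasurableSet A → ν A = ∫⁻ x, Sop M τ (A.indicator 1) x ∂μ

/-- `m = R*ν`, i.e. `m(A) = ∫ R𝟙_A dν` for every borelian `A`. -/
def RstarEq (M : MarkovChain X) (τ : (ℕ → X) → ℕ∞) (ν m : Measure X) : Prop :=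
  ∀ A : Set X, MeasurableSet A → m A = ∫⁻ x, Rop M τ (A.indicator 1) x ∂ν

/-- the real-valued Markov operator -/
def Pr (M : MarkovChain X) (f : X → ℝ) (x : X) : ℝ := ∫ ω, f (ω 1) ∂M.law x

/-- the real-valued induced operator -/
def Qr (M : MarkovChain X) (τ : (ℕ → X) → ℕ∞) (g : X → ℝ) (x : X) : ℝ :=
  ∫ ω in {ω | τ ω ≠ ⊤}, g (ω (τ ω).toNat) ∂M.law x

/-- the real-valued operator `S` -/
def Sr (M : MarkovChain X) (τ : (ℕ → X) → ℕ∞) (f : X → ℝ) (x : X) : ℝ :=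
  ∫ ω in {ω | τ ω = 1}, f (ω 1) ∂M.law x

/-- the real-valued operator `R` -/
def Rr (M : MarkovChain X) (τ : (ℕ → X) → ℕ∞) (f : X → ℝ) (x : X) : ℝ :=
  ∫ ω in {ω | τ ω ≠ ⊤}, ∑ k ∈ Finset.range (τ ω).toNat, f (ω k) ∂M.law x

/-- `𝔼_x τ` as a real number. -/
def Etau (M : MarkovChain X) (τ : (ℕ → X) → ℕ∞) (x : X) : ℝ := (EtauE M τ x).toReal

/-- `B_u = sup (Pu - u) + 1`. -/
def Bu (M : MarkovChain X) (u : X → ℝ) : ℝ :=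
  sSup (Set.range fun x => Pr M u x - u x) + 1

/-- the weight `u - Pu + B_u` defining the space `𝓔_u`. -/
def wE (M : MarkovChain X) (u : X → ℝ) : X → ℝ := fun x => u x - Pr M u x + Bu M u

/-- `u` is a drift function: `u ≥ 1`, `u - Pu` is bounded below and, with
`B_u = sup (Pu - u) + 1`, the functions `Qu`, `𝔼τ/u` and `P(u-Pu+B_u)/(u-Pu+B_u)` are
bounded. -/
structure IsDrift (M : MarkovChain X) (τ : (ℕ → X) → ℕ∞) (u : X → ℝ) : Prop where
  meas : Measurable u
  one_le : ∀ x, 1 ≤ u x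
  int_one : ∀ x, Integrable (fun ω => u (ω 1)) (M.law x)
  bdd : BddAbove (Set.range fun x => Pr M u x - u x)
  etau_ne_top : ∀ x, EtauE M τ x ≠ ⊤
  qu_bdd : ∃ C : ℝ, ∀ x, Qr M τ u x ≤ C
  etau_div_bdd : ∃ C : ℝ, ∀ x, Etau M τ x ≤ C * u x
  pw_bdd : ∃ C : ℝ, ∀ x, Pr M (wE M u) x ≤ C * wE M u x

/-- membership in the weighted space `𝓕^p_v` : `f` is borelian and `|f| ≤ C v^{1/p}`. -/
def MemWp (v : X → ℝ) (p : ℝ) (f : X → ℝ) : Prop :=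
  Measurable f ∧ ∃ C : ℝ, ∀ x, |f x| ≤ C * v x ^ (1 / p)

/-- the norm of the weighted space `𝓕^p_v` : `‖f‖ = sup_x |f(x)|/v(x)^{1/p}`. -/
def normWp (v : X → ℝ) (p : ℝ) (f : X → ℝ) : ℝ := ⨆ x, |f x| / v x ^ (1 / p)

/-- ergodicity among a class of invariant measures: a finite nonzero invariant measure is
ergodic if it is not a nontrivial convex combination of two distinct invariant probability
measures. -/
def ErgodicAmong (Inv : Measure X → Prop) (μ : Measure X) : Prop :=
  μ ≠ 0 ∧ ∀ (ν₁ ν₂ : Measure X) (t : ℝ≥0∞), Inv ν₁ → Inv ν₂ →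
    IsProbabilityMeasure ν₁ → IsProbabilityMeasure ν₂ → 0 < t → t < 1 →
    μ = μ Set.univ • (t • ν₁ + (1 - t) • ν₂) → ν₁ = ν₂


/-!
On `{τ ≥ 2}`, θ-compatibility gives `∑_{k<τ} f(X_k) = f(X_0) + (∑_{k<τ} f(X_k)) ∘ θ` and
`f(X_τ) = f(X_τ) ∘ θ`, and the Markov property at time `1` turns the shifted path functionals
into `Rf(X_1)` and `Qf(X_1)`; splitting `Pg(x)` along `{τ = 1}` and `{τ ≥ 2}` then gives the
second and third identities. For the first and the last, `R` is expanded as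
`∑_k ∫_{τ>k} f(X_k)` and the Markov property is applied at each time `k`; `RS = Q` moreover
needs `τ ∘ θ^k = τ - k` on `{τ > k}`, which follows by iterating θ-compatibility once the Markov
property has transported its exceptional null set along `θ^k`.
-/

section StoppingTime

variable {Ω : Type*} [MeasurableSpace Ω] {μ : Measure Ω} {τ : Ω → ℕ∞}

lemma measurable_comp_of_measurable_enat {β : Type*} [MeasurableSpace β] (hτ : Measurable τ)
    {F : ℕ∞ → Ω → β} (hF : ∀ n, Measurable (F n)) : Measurable fun ω => F (τ ω) ω :=
  (measurable_from_prod_countable_left (f := fun p : Ω × ℕ∞ => F p.2 p.1) hF).comp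
    (measurable_id.prodMk hτ)

lemma measurableSet_setOf_enat (hτ : Measurable τ) (p : ℕ∞ → Prop) :
    MeasurableSet {ω | p (τ ω)} :=
  hτ (Set.to_countable {t | p t}).measurableSet

lemma lintegral_eq_tau_eq_one_add (hτ : Measurable τ) (h0 : μ {ω | τ ω = 0} = 0)
    (G : Ω → ℝ≥0∞) :
    ∫⁻ ω, G ω ∂μ = ∫⁻ ω in {ω | τ ω = 1}, G ω ∂μ + ∫⁻ ω in {ω | 1 < τ ω}, G ω ∂μ := by
  have hcover : ({ω | τ ω = 1} ∪ {ω | 1 < τ ω} : Set Ω) =ᵐ[μ] Set.univ := by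
    refine ae_eq_univ.mpr (measure_mono_null (fun ω hω => ?_) h0)
    simp only [Set.mem_compl_iff, Set.mem_union, Set.mem_ofPred_eq, not_or, not_lt] at hω ⊢
    exact Order.lt_one_iff.mp (lt_of_le_of_ne hω.2 hω.1)
  have hdisj : Disjoint {ω | τ ω = 1} {ω | 1 < τ ω} :=
    Set.disjoint_left.mpr fun ω h1 h2 => (ne_of_lt h2).symm h1
  rw [← lintegral_union (measurableSet_setOf_enat hτ _) hdisj, setLIntegral_congr hcover,
    Measure.restrict_univ]

lemma lintegral_sum_range_toNat (hτ : Measurable τ) (hfin : ∀ᵐ ω ∂μ, τ ω ≠ ⊤)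
    {F : ℕ → Ω → ℝ≥0∞} (hF : ∀ k, Measurable (F k)) :
    ∫⁻ ω, ∑ k ∈ Finset.range (τ ω).toNat, F k ω ∂μ =
      ∑' k : ℕ, ∫⁻ ω in {ω | (k : ℕ∞) < τ ω}, F k ω ∂μ := by
  have hsum : ∀ᵐ ω ∂μ, ∑ k ∈ Finset.range (τ ω).toNat, F k ω =
      ∑' k : ℕ, {ω | (k : ℕ∞) < τ ω}.indicator (F k) ω := by
    filter_upwards [hfin] with ω hω
    obtain ⟨m, hm⟩ := ENat.ne_top_iff_exists.mp hω
    rw [← hm, tsum_eq_sum (s := Finset.range m) fun k hk =>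
      Set.indicator_of_notMem (by simpa [← hm] using hk) _]
    exact Finset.sum_congr rfl fun k hk =>
      (Set.indicator_of_mem (by simpa [← hm] using hk) _).symm
  rw [lintegral_congr_ae hsum, lintegral_tsum fun k =>
    ((hF k).indicator (measurableSet_setOf_enat hτ _)).aemeasurable]
  simp only [lintegral_indicator (measurableSet_setOf_enat hτ _)]

end StoppingTime

section PathSpace

def pshiftBy {Y : Type*} (k : ℕ) (ω : ℕ → Y) : ℕ → Y := fun j => ω (j + k)

lemma measurable_pshiftBy (k : ℕ) : Measurable (pshiftBy (Y := X) k) :=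
  measurable_pi_lambda _ fun _ => measurable_pi_apply _

lemma pshift_pshiftBy {Y : Type*} (k : ℕ) (ω : ℕ → Y) :
    pshift (pshiftBy k ω) = pshiftBy (k + 1) ω :=
  funext fun j => congrArg ω (by omega)

lemma pathFiltration_le (n : ℕ) : pathFiltration X n ≤ MeasurableSpace.pi :=
  measurable_iff_comap_le.mp (measurable_pi_lambda _ fun _ => measurable_pi_apply _)

lemma pathFiltration_mono {m n : ℕ} (h : m ≤ n) : pathFiltration X m ≤ pathFiltration X n := by
  rintro s ⟨t, ht, rfl⟩
  exact ⟨(fun v (i : Fin (m + 1)) => v (Fin.castLE (by omega) i)) ⁻¹' t,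
    (measurable_pi_lambda _ fun _ => measurable_pi_apply _) ht, rfl⟩

namespace IsPathStoppingTime

variable {τ : (ℕ → X) → ℕ∞}

lemma measurable (hτ : IsPathStoppingTime τ) : Measurable τ :=
  ENat.measurable_iff.mpr fun n => pathFiltration_le n _ (hτ n)

lemma measurableSet_lt (hτ : IsPathStoppingTime τ) (k : ℕ) :
    MeasurableSet[pathFiltration X k] {ω | (k : ℕ∞) < τ ω} := by
  have hle : {ω | (k : ℕ∞) < τ ω} = (⋃ j ∈ Finset.range (k + 1), {ω | τ ω = (j : ℕ∞)})ᶜ := by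
    ext ω
    simp only [Set.mem_ofPred_eq, Set.mem_compl_iff, Set.mem_iUnion, Finset.mem_range,
      exists_prop, not_exists, not_and]
    induction τ ω using ENat.recTopCoe with
    | top => simp
    | coe m =>
      simp only [Nat.cast_lt, Nat.cast_inj]
      exact ⟨fun h i hi => by omega, fun h => not_le.mp fun hle => h m (by omega) rfl⟩
  rw [hle]
  exact (Finset.measurableSet_biUnion _ fun j hj =>
    pathFiltration_mono (Nat.lt_succ_iff.mp (Finset.mem_range.mp hj)) _ (hτ j)).compl

end IsPathStoppingTime

end PathSpace

namespace MarkovChain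

variable (M : MarkovChain X)

lemma lintegral_comp_zero (x : X) {g : X → ℝ≥0∞} (hg : Measurable g) :
    ∫⁻ ω, g (ω 0) ∂M.law x = g x := by
  rw [← lintegral_map hg (measurable_pi_apply 0), M.start x, lintegral_dirac' x hg]

lemma measurable_lintegral_law {G : (ℕ → X) → ℝ≥0∞} (hG : Measurable G) :
    Measurable fun y => ∫⁻ η, G η ∂M.law y :=
  (Measure.measurable_lintegral hG).comp M.meas_law

lemma setLIntegral_comp_pshiftBy (x : X) (k : ℕ) {A : Set (ℕ → X)}
    (hA : MeasurableSet[pathFiltration X k] A) {G : (ℕ → X) → ℝ≥0∞} (hG : Measurable G) :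
    ∫⁻ ω in A, G (pshiftBy k ω) ∂M.law x = ∫⁻ ω in A, ∫⁻ η, G η ∂M.law (ω k) ∂M.law x :=
  M.markov x k A hA G hG

lemma ae_comp_pshiftBy {p : (ℕ → X) → Prop} (hp : MeasurableSet {ω | p ω})
    (h : ∀ y, ∀ᵐ ω ∂M.law y, p ω) (x : X) (k : ℕ) : ∀ᵐ ω ∂M.law x, p (pshiftBy k ω) := by
  rw [ae_iff, show {ω | ¬p (pshiftBy k ω)} = pshiftBy k ⁻¹' {ω | p ω}ᶜ from rfl,
    ← lintegral_indicator_one (measurable_pshiftBy k hp.compl)]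
  calc ∫⁻ ω, {ω | p ω}ᶜ.indicator 1 (pshiftBy k ω) ∂M.law x
      = ∫⁻ ω, ∫⁻ η, {ω | p ω}ᶜ.indicator 1 η ∂M.law (ω k) ∂M.law x := by
        simpa using M.setLIntegral_comp_pshiftBy x k MeasurableSet.univ
          (measurable_one.indicator hp.compl)
    _ = 0 := by
        have h0 : ∀ y, M.law y {ω | p ω}ᶜ = 0 := fun y => ae_iff.mp (h y)
        simp [lintegral_indicator_one hp.compl, h0]

end MarkovChain

section StoppedChain

variable {M : MarkovChain X} {τ : (ℕ → X) → ℕ∞} {f : X → ℝ≥0∞}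

lemma ae_tau_ne_top (hfin : ∀ x, M.law x {ω | τ ω = ⊤} = 0) (x : X) :
    ∀ᵐ ω ∂M.law x, τ ω ≠ ⊤ :=
  measure_eq_zero_iff_ae_notMem.mp (hfin x)

lemma ThetaCompatible.ae_tau_pshiftBy (hτ : IsPathStoppingTime τ) (hθ : ThetaCompatible M τ)
    (x : X) (k : ℕ) : ∀ᵐ ω ∂M.law x, (k : ℕ∞) < τ ω → τ (pshiftBy k ω) = τ ω - k := by
  induction k with
  | zero => exact ae_of_all _ fun ω _ => by rw [Nat.cast_zero, tsub_zero]; rfl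
  | succ k ih =>
    have hmeas : MeasurableSet {ω : ℕ → X | 2 ≤ τ ω → τ (pshift ω) = τ ω - 1} :=
      (hτ.measurable.prodMk (hτ.measurable.comp (measurable_pshiftBy 1)))
        (Set.to_countable {q : ℕ∞ × ℕ∞ | 2 ≤ q.1 → q.2 = q.1 - 1}).measurableSet
    filter_upwards [ih, M.ae_comp_pshiftBy hmeas hθ.2 x k] with ω hk hstep hlt
    have hk' := hk (lt_trans (by exact_mod_cast k.lt_succ_self) hlt)
    have h2 : 2 ≤ τ (pshiftBy k ω) := by
      rw [hk']
      generalize τ ω = t at hlt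
      induction t using ENat.recTopCoe with
      | top => simp
      | coe m => norm_cast at hlt ⊢; omega
    rw [← pshift_pshiftBy, hstep h2, hk', tsub_tsub, Nat.cast_succ]

lemma ThetaCompatible.ae_tau_pshift (hθ : ThetaCompatible M τ)
    (hfin : ∀ x, M.law x {ω | τ ω = ⊤} = 0) (x : X) :
    ∀ᵐ ω ∂M.law x, 1 < τ ω → ∃ n : ℕ, τ ω = (n + 2 : ℕ) ∧ τ (pshift ω) = (n + 1 : ℕ) := by
  filter_upwards [hθ.2 x, ae_tau_ne_top hfin x] with ω hstep hω hlt
  obtain ⟨m, hm⟩ := ENat.ne_top_iff_exists.mp hω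
  rw [← hm] at hlt hstep
  norm_cast at hlt
  refine ⟨m - 2, by rw [← hm]; congr 1; omega, ?_⟩
  rw [hstep (by exact_mod_cast hlt)]
  norm_cast
  omega


lemma measurable_sum_range_toNat (hτ : IsPathStoppingTime τ) (hf : Measurable f) :
    Measurable fun ω : ℕ → X => ∑ k ∈ Finset.range (τ ω).toNat, f (ω k) :=
  measurable_comp_of_measurable_enat hτ.measurable
    (F := fun n ω => ∑ k ∈ Finset.range n.toNat, f (ω k))
    fun _ => Finset.measurable_sum _ fun k _ => hf.fun_comp (measurable_pi_apply k)

lemma Qop_eq_lintegral (hfin : ∀ x, M.law x {ω | τ ω = ⊤} = 0) (x : X) :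
    Qop M τ f x = ∫⁻ ω, f (ω (τ ω).toNat) ∂M.law x := by
  rw [Qop, Measure.restrict_eq_self_of_ae_mem (s := {ω | τ ω ≠ ⊤}) (ae_tau_ne_top hfin x)]

lemma Rop_eq_lintegral (hfin : ∀ x, M.law x {ω | τ ω = ⊤} = 0) (x : X) :
    Rop M τ f x = ∫⁻ ω, ∑ k ∈ Finset.range (τ ω).toNat, f (ω k) ∂M.law x := by
  rw [Rop, Measure.restrict_eq_self_of_ae_mem (s := {ω | τ ω ≠ ⊤}) (ae_tau_ne_top hfin x)]

lemma Rop_eq_tsum (hτ : IsPathStoppingTime τ) (hfin : ∀ x, M.law x {ω | τ ω = ⊤} = 0)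
    (hf : Measurable f) (x : X) :
    Rop M τ f x = ∑' k : ℕ, ∫⁻ ω in {ω | (k : ℕ∞) < τ ω}, f (ω k) ∂M.law x := by
  rw [Rop_eq_lintegral hfin]
  exact lintegral_sum_range_toNat hτ.measurable (ae_tau_ne_top hfin x)
    fun k => hf.fun_comp (measurable_pi_apply k)

lemma Rop_lintegral_law_eq_tsum (hτ : IsPathStoppingTime τ)
    (hfin : ∀ x, M.law x {ω | τ ω = ⊤} = 0) {G : (ℕ → X) → ℝ≥0∞} (hG : Measurable G) (x : X) :
    Rop M τ (fun y => ∫⁻ η, G η ∂M.law y) x =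
      ∑' k : ℕ, ∫⁻ ω in {ω | (k : ℕ∞) < τ ω}, G (pshiftBy k ω) ∂M.law x := by
  rw [Rop_eq_tsum hτ hfin (M.measurable_lintegral_law hG)]
  exact tsum_congr fun k => (M.setLIntegral_comp_pshiftBy x k (hτ.measurableSet_lt k) hG).symm

lemma Pop_eq_Sop_add (hτ : IsPathStoppingTime τ) (hθ : ThetaCompatible M τ) (g : X → ℝ≥0∞)
    (x : X) : Pop M g x = Sop M τ g x + ∫⁻ ω in {ω | 1 < τ ω}, g (ω 1) ∂M.law x :=
  lintegral_eq_tau_eq_one_add hτ.measurable (hθ.1 x) _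

lemma setLIntegral_one_lt_comp_pshift (hτ : IsPathStoppingTime τ) (x : X)
    {G : (ℕ → X) → ℝ≥0∞} (hG : Measurable G) :
    ∫⁻ ω in {ω | 1 < τ ω}, G (pshift ω) ∂M.law x =
      ∫⁻ ω in {ω | 1 < τ ω}, ∫⁻ η, G η ∂M.law (ω 1) ∂M.law x := by
  have h1 := hτ.measurableSet_lt 1
  rw [Nat.cast_one] at h1
  exact M.setLIntegral_comp_pshiftBy x 1 h1 hG

lemma Rop_eq_add_setLIntegral (hτ : IsPathStoppingTime τ) (hθ : ThetaCompatible M τ)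
    (hfin : ∀ x, M.law x {ω | τ ω = ⊤} = 0) (hf : Measurable f) (x : X) :
    Rop M τ f x = f x + ∫⁻ ω in {ω | 1 < τ ω}, Rop M τ f (ω 1) ∂M.law x := by
  let F : (ℕ → X) → ℝ≥0∞ := fun ω => ∑ k ∈ Finset.range (τ ω).toNat, f (ω k)
  have hF : Measurable F := measurable_sum_range_toNat hτ hf
  have hone : ∫⁻ ω in {ω | τ ω = 1}, F ω ∂M.law x = ∫⁻ ω in {ω | τ ω = 1}, f (ω 0) ∂M.law x :=
    setLIntegral_congr_fun (measurableSet_setOf_enat hτ.measurable (· = 1)) fun ω hω => by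
      simp [F, Set.mem_ofPred_eq.mp hω]
  have hlt : ∫⁻ ω in {ω | 1 < τ ω}, F ω ∂M.law x =
      ∫⁻ ω in {ω | 1 < τ ω}, f (ω 0) + F (pshift ω) ∂M.law x := by
    refine setLIntegral_congr_fun_ae (measurableSet_setOf_enat hτ.measurable _) ?_
    filter_upwards [hθ.ae_tau_pshift hfin x] with ω h hlt
    obtain ⟨n, hn, hn'⟩ := h hlt
    simp only [F, hn, hn', ENat.toNat_natCast, Finset.sum_range_succ' _ (n + 1)]
    exact add_comm _ _
  rw [Rop_eq_lintegral hfin, lintegral_eq_tau_eq_one_add hτ.measurable (hθ.1 x), hone, hlt,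
    lintegral_add_left (f := fun ω : ℕ → X => f (ω 0)) (hf.fun_comp (measurable_pi_apply 0)),
    ← add_assoc,
    ← lintegral_eq_tau_eq_one_add hτ.measurable (hθ.1 x), M.lintegral_comp_zero x hf,
    setLIntegral_one_lt_comp_pshift hτ x hF]
  simp only [F, Rop_eq_lintegral hfin]

lemma Qop_eq_Sop_add (hτ : IsPathStoppingTime τ) (hθ : ThetaCompatible M τ)
    (hfin : ∀ x, M.law x {ω | τ ω = ⊤} = 0) (hf : Measurable f) (x : X) :
    Qop M τ f x = Sop M τ f x + ∫⁻ ω in {ω | 1 < τ ω}, Qop M τ f (ω 1) ∂M.law x := by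
  let F : (ℕ → X) → ℝ≥0∞ := fun ω => f (ω (τ ω).toNat)
  have hF : Measurable F := measurable_comp_of_measurable_enat hτ.measurable
    (F := fun n ω => f (ω n.toNat)) fun n => hf.fun_comp (measurable_pi_apply _)
  have hone : ∫⁻ ω in {ω | τ ω = 1}, F ω ∂M.law x = Sop M τ f x :=
    setLIntegral_congr_fun (measurableSet_setOf_enat hτ.measurable (· = 1)) fun ω hω => by
      simp [F, Set.mem_ofPred_eq.mp hω]
  have hlt : ∫⁻ ω in {ω | 1 < τ ω}, F ω ∂M.law x =
      ∫⁻ ω in {ω | 1 < τ ω}, F (pshift ω) ∂M.law x := by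
    refine setLIntegral_congr_fun_ae (measurableSet_setOf_enat hτ.measurable _) ?_
    filter_upwards [hθ.ae_tau_pshift hfin x] with ω h hlt
    obtain ⟨n, hn, hn'⟩ := h hlt
    simp only [F, hn, hn', ENat.toNat_natCast]
    rfl
  rw [Qop_eq_lintegral hfin, lintegral_eq_tau_eq_one_add hτ.measurable (hθ.1 x), hone, hlt,
    setLIntegral_one_lt_comp_pshift hτ x hF]
  simp only [F, Qop_eq_lintegral hfin]

/-- `τ ≥ 1` a.s., so `f(X_τ)` is the only nonzero term of `∑_{k<τ} 𝟙_{τ=k+1} f(X_{k+1})`. -/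
lemma Qop_eq_tsum (hτ : IsPathStoppingTime τ) (hθ : ThetaCompatible M τ)
    (hfin : ∀ x, M.law x {ω | τ ω = ⊤} = 0) (hf : Measurable f) (x : X) :
    Qop M τ f x = ∑' k : ℕ, ∫⁻ ω in {ω | (k : ℕ∞) < τ ω},
      {ω | τ ω = (k + 1 : ℕ)}.indicator (fun ω => f (ω (k + 1))) ω ∂M.law x := by
  rw [Qop_eq_lintegral hfin, ← lintegral_sum_range_toNat hτ.measurable (ae_tau_ne_top hfin x)
    fun k => (hf.fun_comp (measurable_pi_apply (k + 1))).indicator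
      (measurableSet_setOf_enat hτ.measurable (· = ((k + 1 : ℕ) : ℕ∞)))]
  refine lintegral_congr_ae ?_
  filter_upwards [ae_tau_ne_top hfin x, measure_eq_zero_iff_ae_notMem.mp (hθ.1 x)] with ω hω h0
  obtain ⟨m, hm⟩ := ENat.ne_top_iff_exists.mp hω
  obtain ⟨n, rfl⟩ : ∃ n, m = n + 1 := Nat.exists_eq_add_one.mpr (by
    by_contra! h; exact h0 (by simp [← hm, Nat.le_zero.mp h]))
  rw [← hm, ENat.toNat_natCast, Finset.sum_range_succ, Finset.sum_eq_zero fun k hk =>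
    Set.indicator_of_notMem (by simpa [← hm] using (Finset.mem_range.mp hk).ne') _, zero_add,
    Set.indicator_of_mem (by simp [← hm])]

lemma Rop_add_Qop (hτ : IsPathStoppingTime τ) (hfin : ∀ x, M.law x {ω | τ ω = ⊤} = 0)
    (hf : Measurable f) (x : X) : Rop M τ f x + Qop M τ f x = f x + Rop M τ (Pop M f) x := by
  have hpath : ∀ ω : ℕ → X, ∑ k ∈ Finset.range (τ ω).toNat, f (ω k) + f (ω (τ ω).toNat) =
      f (ω 0) + ∑ k ∈ Finset.range (τ ω).toNat, f (ω (k + 1)) := fun ω => by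
    rw [← Finset.sum_range_succ, Finset.sum_range_succ', add_comm]
  calc Rop M τ f x + Qop M τ f x
      = ∫⁻ ω, f (ω 0) + ∑ k ∈ Finset.range (τ ω).toNat, f (ω (k + 1)) ∂M.law x := by
        rw [Rop_eq_lintegral hfin, Qop_eq_lintegral hfin,
          ← lintegral_add_left (measurable_sum_range_toNat hτ hf)]
        simp only [hpath]
    _ = f x + ∑' k : ℕ, ∫⁻ ω in {ω | (k : ℕ∞) < τ ω}, f (ω (k + 1)) ∂M.law x := by
        rw [lintegral_add_left (f := fun ω : ℕ → X => f (ω 0))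
            (hf.fun_comp (measurable_pi_apply 0)), M.lintegral_comp_zero x hf,
          lintegral_sum_range_toNat hτ.measurable (ae_tau_ne_top hfin x)
            fun k => hf.fun_comp (measurable_pi_apply _)]
    _ = f x + Rop M τ (Pop M f) x := by
        unfold Pop
        rw [Rop_lintegral_law_eq_tsum hτ hfin (hf.fun_comp (measurable_pi_apply 1))]
        simp only [pshiftBy, Nat.add_comm 1]

lemma add_Pop_Rop (hτ : IsPathStoppingTime τ) (hθ : ThetaCompatible M τ)
    (hfin : ∀ x, M.law x {ω | τ ω = ⊤} = 0) (hf : Measurable f) (x : X) :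
    f x + Pop M (Rop M τ f) x = Rop M τ f x + Sop M τ (Rop M τ f) x := by
  rw [Pop_eq_Sop_add hτ hθ, Rop_eq_add_setLIntegral hτ hθ hfin hf x]
  ring

lemma Sop_add_Pop_Qop (hτ : IsPathStoppingTime τ) (hθ : ThetaCompatible M τ)
    (hfin : ∀ x, M.law x {ω | τ ω = ⊤} = 0) (hf : Measurable f) (x : X) :
    Sop M τ f x + Pop M (Qop M τ f) x = Sop M τ (Qop M τ f) x + Qop M τ f x := by
  rw [Pop_eq_Sop_add hτ hθ, Qop_eq_Sop_add hτ hθ hfin hf x]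
  ring

lemma Rop_Sop (hτ : IsPathStoppingTime τ) (hθ : ThetaCompatible M τ)
    (hfin : ∀ x, M.law x {ω | τ ω = ⊤} = 0) (hf : Measurable f) (x : X) :
    Rop M τ (Sop M τ f) x = Qop M τ f x := by
  have hone : MeasurableSet {ω : ℕ → X | τ ω = 1} :=
    measurableSet_setOf_enat hτ.measurable (· = 1)
  have hSop : Sop M τ f = fun y => ∫⁻ η, {η | τ η = 1}.indicator (fun η => f (η 1)) η ∂M.law y :=
    funext fun y => (lintegral_indicator hone _).symm
  rw [hSop, Rop_lintegral_law_eq_tsum hτ hfin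
    ((hf.fun_comp (measurable_pi_apply 1)).indicator hone), Qop_eq_tsum hτ hθ hfin hf x]
  refine tsum_congr fun k =>
    setLIntegral_congr_fun_ae (measurableSet_setOf_enat hτ.measurable ((k : ℕ∞) < ·)) ?_
  filter_upwards [hθ.ae_tau_pshiftBy hτ x k] with ω h hk
  have hiff : τ ω - k = 1 ↔ τ ω = (k + 1 : ℕ) := by
    generalize τ ω = t at hk
    induction t using ENat.recTopCoe with
    | top => simpa using (ENat.natCast_ne_top (k + 1)).symm
    | coe m => norm_cast at hk ⊢; omega
  simp only [Set.indicator, Set.mem_ofPred_eq, h hk, hiff, pshiftBy, Nat.add_comm 1 k]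

end StoppedChain

/-- Proposition 1.5: for a θ-compatible stopping time, the identities
`(R+Q)f = f + RPf`, `f + PRf = Rf + SRf`, `Sf + PQf = SQf + Qf` and `RSf = Qf`
hold pointwise for every nonnegative borelian `f`, as equalities in `[0,∞]`. -/
theorem stmt0 (M : MarkovChain X) (τ : (ℕ → X) → ℕ∞)
    (hst : IsPathStoppingTime τ) (hθ : ThetaCompatible M τ)
    (hfin : ∀ x, M.law x {ω | τ ω = ⊤} = 0)
    (f : X → ℝ≥0∞) (hf : Measurable f) (x : X) :
    Rop M τ f x + Qop M τ f x = f x + Rop M τ (Pop M f) x ∧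
    f x + Pop M (Rop M τ f) x = Rop M τ f x + Sop M τ (Rop M τ f) x ∧
    Sop M τ f x + Pop M (Qop M τ f) x = Sop M τ (Qop M τ f) x + Qop M τ f x ∧
    Rop M τ (Sop M τ f) x = Qop M τ f x :=
  ⟨Rop_add_Qop hst hfin hf x, add_Pop_Rop hst hθ hfin hf x, Sop_add_Pop_Qop hst hθ hfin hf x,
    Rop_Sop hst hθ hfin hf x⟩
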